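/- Let ω ⊆ ℝ² be a bounded open set and M > 0. Let q : ℝ² × ℝ → ℝ be measurable with |q(x',x₃)| ≤ 2M for all (x',x₃) and q(x',x₃) = 0 whenever x' ∉ cl(ω). Then there exists a constant C > 0, depending only on ω, M, φ and h, such that for every δ ∈ (0,1) and every y₃ ∈ ℝ the map y' ↦ R_δ[q](y',y₃) is differentiable on ℝ² and (∫_{ℝ²} ‖∇_{y'} R_δ[q](y',y₃)‖² dy')^{1/2} ≤ C·δ^{-1}. -/

import Mathlib

/-!
Integrating out `x₃` first, `y' ↦ R_δ[q](y', y₃)` is the convolution of the kernel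
`k_δ = Φ_δ(0, ·)²`, which is `C¹`, supported in the ball of radius `δ` and has
`‖∇k_δ‖ ≤ δ⁻³ sup ‖∇(φ²)‖`, with the vertical average `Q(x') = ∫ h_δ(x₃, y₃)² q(x', x₃) dx₃`,
which is bounded by `2M ∫ h²` and vanishes off `cl ω`. Hence `∇R_δ = ∇k_δ ⋆ Q` is bounded by
`δ⁻³ · 2M ∫ h² · |B_δ| = O(δ⁻¹)` and vanishes off the compact `1`-neighbourhood of `cl ω`.
-/

open MeasureTheory Metric Set

noncomputable def Phid (φ : EuclideanSpace ℝ (Fin 2) → ℝ) (δ : ℝ)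
    (x' y' : EuclideanSpace ℝ (Fin 2)) : ℝ := δ⁻¹ * φ (δ⁻¹ • (x' - y'))

noncomputable def hdel (h : ℝ → ℝ) (δ x3 y3 : ℝ) : ℝ :=
  δ ^ (-(1 / 2) : ℝ) * h ((x3 - y3) / δ)

noncomputable def Rdel (φ : EuclideanSpace ℝ (Fin 2) → ℝ) (h : ℝ → ℝ)
    (q : EuclideanSpace ℝ (Fin 2) → ℝ → ℝ) (δ : ℝ)
    (y' : EuclideanSpace ℝ (Fin 2)) (y3 : ℝ) : ℝ :=
  ∫ x3 : ℝ, ∫ x' : EuclideanSpace ℝ (Fin 2),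
    (Phid φ δ x' y') ^ 2 * (hdel h δ x3 y3) ^ 2 * q x' x3

open Function
open scoped Convolution

section Convolution

variable {G E E' F : Type*} [NormedAddCommGroup G] [MeasurableSpace G]
  [NormedAddCommGroup E] [NormedSpace ℝ E] [NormedAddCommGroup E'] [NormedSpace ℝ E']
  [NormedAddCommGroup F] [NormedSpace ℝ F] {μ : Measure G} {k : G → E} {g : G → E'}
  {L : E →L[ℝ] E' →L[ℝ] F}

theorem norm_convolution_le_of_support_subset_closedBall [BorelSpace G] [ProperSpace G]
    [IsFiniteMeasureOnCompacts μ]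
    (hL : ∀ a b, ‖L a b‖ ≤ ‖a‖ * ‖b‖) {r D K : ℝ} (hk : ∀ t, ‖k t‖ ≤ D)
    (hk_supp : support k ⊆ closedBall 0 r) (hg : ∀ x, ‖g x‖ ≤ K) (x : G) :
    ‖(k ⋆[L, μ] g) x‖ ≤ D * K * μ.real (closedBall 0 r) := by
  have hpt : ∀ t, ‖L (k t) (g (x - t))‖ ≤ (closedBall 0 r).indicator (fun _ => D * K) t := by
    intro t
    by_cases ht : t ∈ closedBall 0 r
    · rw [indicator_of_mem ht]
      exact (hL _ _).trans (mul_le_mul (hk t) (hg _) (norm_nonneg _) ((norm_nonneg _).trans (hk t)))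
    · rw [indicator_of_notMem ht]
      simp [notMem_support.1 (fun h => ht (hk_supp h))]
  rw [convolution_def]
  calc _ ≤ ∫ t, (closedBall 0 r).indicator (fun _ => D * K) t ∂μ :=
        norm_integral_le_of_norm_le
          ((integrable_indicator_iff measurableSet_closedBall).2 (integrableOn_const
            measure_closedBall_lt_top.ne)) (ae_of_all _ hpt)
    _ = _ := by rw [integral_indicator_const _ measurableSet_closedBall, smul_eq_mul, mul_comm]

theorem support_convolution_subset_cthickening {r : ℝ} {s : Set G}
    (hk : support k ⊆ closedBall 0 r) (hg : support g ⊆ s) :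
    support (k ⋆[L, μ] g) ⊆ cthickening r s := by
  refine (support_convolution_subset L).trans ?_
  rintro _ ⟨a, ha, b, hb, rfl⟩
  exact mem_cthickening_of_dist_le _ b r s (hg hb) (by simpa [dist_eq_norm] using hk ha)

end Convolution

theorem sqrt_integral_norm_sq_le {X F : Type*} [MeasurableSpace X] [NormedAddCommGroup F]
    {μ : Measure X} {u : X → F} {s : Set X} (hs : MeasurableSet s) (hμs : μ s ≠ ⊤) {c : ℝ}
    (hc : 0 ≤ c) (hu : ∀ x, ‖u x‖ ≤ c) (hu_supp : support u ⊆ s) :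
    √(∫ x, ‖u x‖ ^ 2 ∂μ) ≤ √(μ.real s) * c := by
  have hpt : ∀ x, ‖u x‖ ^ 2 ≤ s.indicator (fun _ => c ^ 2) x := by
    intro x
    by_cases hx : x ∈ s
    · rw [indicator_of_mem hx]
      exact pow_le_pow_left₀ (norm_nonneg _) (hu x) 2
    · rw [indicator_of_notMem hx]
      simp [notMem_support.1 (fun h => hx (hu_supp h))]
  calc √(∫ x, ‖u x‖ ^ 2 ∂μ) ≤ √(∫ x, s.indicator (fun _ => c ^ 2) x ∂μ) :=
        Real.sqrt_le_sqrt (integral_mono_of_nonneg (ae_of_all _ fun _ => by positivity)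
          ((integrable_indicator_iff hs).2 (integrableOn_const hμs)) (ae_of_all _ hpt))
    _ = √(μ.real s) * c := by
        rw [integral_indicator_const _ hs, smul_eq_mul, Real.sqrt_mul measureReal_nonneg,
          Real.sqrt_sq hc]

local notation "𝔼" => EuclideanSpace ℝ (Fin 2)

section Kernels

variable {φ : 𝔼 → ℝ} {h : ℝ → ℝ} {δ : ℝ}

theorem Phid_eq_Phid_zero (φ : 𝔼 → ℝ) (δ : ℝ) (x' y' : 𝔼) :
    Phid φ δ x' y' = Phid φ δ 0 (y' - x') := by
  simp [Phid]

theorem support_Phid_zero_subset (hφ : support φ ⊆ closedBall 0 1) (hδ : 0 < δ) :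
    support (Phid φ δ 0) ⊆ closedBall 0 δ := by
  intro t ht
  have h1 := hφ (right_ne_zero_of_mul ht)
  rw [mem_closedBall_zero_iff, norm_smul, norm_inv, Real.norm_of_nonneg hδ.le, zero_sub, norm_neg,
    inv_mul_le_iff₀ hδ, mul_one] at h1
  exact mem_closedBall_zero_iff.2 h1

theorem norm_fderiv_Phid_zero_sq_le {S : ℝ}
    (hS : ∀ z, ‖fderiv ℝ (fun z => φ z ^ 2) z‖ ≤ S) (hδ : 0 < δ) (t : 𝔼) :
    ‖fderiv ℝ (fun t => Phid φ δ 0 t ^ 2) t‖ ≤ δ⁻¹ ^ 3 * S := by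
  set ψ := fun z => φ z ^ 2
  have hfun : (fun t => Phid φ δ 0 t ^ 2) = (δ⁻¹ ^ 2) • fun t => ψ ((-δ⁻¹) • t) := by
    ext t
    simp [ψ, Phid, mul_pow]
  rw [hfun, fderiv_const_smul_field, Pi.smul_apply, fderiv_comp_smul, norm_smul, norm_smul,
    norm_neg, norm_pow, norm_inv, Real.norm_of_nonneg hδ.le, ← mul_assoc, ← pow_succ]
  gcongr
  exact hS _

theorem support_fderiv_Phid_zero_sq_subset (hφ : support φ ⊆ closedBall 0 1) (hδ : 0 < δ) :
    support (fderiv ℝ (fun t => Phid φ δ 0 t ^ 2)) ⊆ closedBall 0 δ := by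
  refine (support_fderiv_subset ℝ).trans (closure_minimal ?_ isClosed_closedBall)
  rw [support_pow _ two_ne_zero]
  exact support_Phid_zero_subset hφ hδ

theorem hdel_sq (hδ : 0 < δ) (x3 y3 : ℝ) :
    hdel h δ x3 y3 ^ 2 = δ⁻¹ * h ((x3 - y3) / δ) ^ 2 := by
  rw [hdel, mul_pow, ← Real.rpow_natCast, ← Real.rpow_mul hδ.le]
  norm_num [Real.rpow_neg_one]

theorem integral_hdel_sq (hδ : 0 < δ) (y3 : ℝ) :
    ∫ x3, hdel h δ x3 y3 ^ 2 = ∫ x, h x ^ 2 := by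
  simp_rw [hdel_sq hδ]
  rw [integral_const_mul, integral_sub_right_eq_self (fun u => h (u / δ) ^ 2) y3,
    Measure.integral_comp_div (fun u => h u ^ 2), abs_of_pos hδ, smul_eq_mul,
    inv_mul_cancel_left₀ hδ.ne']

theorem integrable_hdel_sq (hh : Integrable (fun x => h x ^ 2)) (hδ : 0 < δ) (y3 : ℝ) :
    Integrable (fun x3 => hdel h δ x3 y3 ^ 2) := by
  simp_rw [hdel_sq hδ]
  exact ((hh.comp_div hδ.ne').comp_sub_right y3).const_mul _

end Kernels

noncomputable def verticalAvg (h : ℝ → ℝ) (q : 𝔼 → ℝ → ℝ) (δ y3 : ℝ) (x' : 𝔼) : ℝ :=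
  ∫ x3, hdel h δ x3 y3 ^ 2 * q x' x3

section VerticalAvg

variable {h : ℝ → ℝ} {q : 𝔼 → ℝ → ℝ} {δ K : ℝ}

theorem norm_verticalAvg_le (hh : Integrable (fun x => h x ^ 2)) (hδ : 0 < δ)
    (hq : ∀ x' x3, |q x' x3| ≤ K) (y3 : ℝ) (x' : 𝔼) :
    ‖verticalAvg h q δ y3 x'‖ ≤ K * ∫ x, h x ^ 2 := by
  rw [← integral_hdel_sq hδ y3, ← integral_const_mul]
  refine norm_integral_le_of_norm_le ((integrable_hdel_sq hh hδ y3).const_mul K)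
    (ae_of_all _ fun x3 => ?_)
  rw [norm_mul, Real.norm_eq_abs, Real.norm_eq_abs, abs_sq, mul_comm]
  exact mul_le_mul_of_nonneg_right (hq x' x3) (sq_nonneg _)

theorem support_verticalAvg_subset {s : Set 𝔼} (hq : ∀ x' ∉ s, ∀ x3, q x' x3 = 0) (y3 : ℝ) :
    support (verticalAvg h q δ y3) ⊆ s := by
  intro x' hx'
  by_contra hs
  exact hx' (by simp [verticalAvg, hq x' hs])

theorem aestronglyMeasurable_verticalAvg (hh : Integrable (fun x => h x ^ 2)) (hδ : 0 < δ)
    (hq : Measurable (fun p : 𝔼 × ℝ => q p.1 p.2)) (y3 : ℝ) :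
    AEStronglyMeasurable (verticalAvg h q δ y3) :=
  AEStronglyMeasurable.integral_prod_right' (f := fun p : 𝔼 × ℝ => hdel h δ p.2 y3 ^ 2 * q p.1 p.2)
    ((integrable_hdel_sq hh hδ y3).aestronglyMeasurable.comp_snd.mul hq.aestronglyMeasurable)

end VerticalAvg

section Rdel

variable {φ : 𝔼 → ℝ} {h : ℝ → ℝ} {q : 𝔼 → ℝ → ℝ} {δ K : ℝ}

theorem Rdel_eq_convolution (hφ : Integrable (fun x => φ x ^ 2))
    (hh : Integrable (fun x => h x ^ 2)) (hq_meas : Measurable (fun p : 𝔼 × ℝ => q p.1 p.2))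
    (hq : ∀ x' x3, |q x' x3| ≤ K) (hδ : 0 < δ) (y3 : ℝ) :
    (fun y' => Rdel φ h q δ y' y3)
      = (fun t => Phid φ δ 0 t ^ 2) ⋆[ContinuousLinearMap.lsmul ℝ ℝ] verticalAvg h q δ y3 := by
  ext y'
  have hPhid : Integrable (fun x' => Phid φ δ x' y' ^ 2) := by
    simp_rw [Phid, mul_pow]
    exact ((hφ.comp_smul (inv_ne_zero hδ.ne')).comp_sub_right y').const_mul _
  have hint : Integrable
      (uncurry fun x3 x' => Phid φ δ x' y' ^ 2 * hdel h δ x3 y3 ^ 2 * q x' x3)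
      (volume.prod volume) := by
    refine (((integrable_hdel_sq hh hδ y3).mul_prod hPhid).mul_bdd
      (hq_meas.comp measurable_swap).aestronglyMeasurable
      (ae_of_all _ fun p => hq p.2 p.1)).congr (ae_of_all _ fun p => ?_)
    simp only [uncurry, comp_apply, Prod.fst_swap, Prod.snd_swap]
    ring
  rw [Rdel, integral_integral_swap hint, convolution_eq_swap]
  congr 1 with x'
  simp only [verticalAvg, ContinuousLinearMap.lsmul_apply, smul_eq_mul, ← integral_const_mul,
    Phid_eq_Phid_zero φ δ x' y']
  congr 1 with x3
  ring

theorem hasFDerivAt_Rdel (hφ : ContDiff ℝ 1 φ) (hφ_supp : support φ ⊆ closedBall 0 1)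
    (hh : Integrable (fun x => h x ^ 2)) (hq_meas : Measurable (fun p : 𝔼 × ℝ => q p.1 p.2))
    (hq : ∀ x' x3, |q x' x3| ≤ K) (hδ : 0 < δ) (y3 : ℝ) (y : 𝔼) :
    HasFDerivAt (fun y' => Rdel φ h q δ y' y3)
      ((fderiv ℝ (fun t => Phid φ δ 0 t ^ 2) ⋆[(ContinuousLinearMap.lsmul ℝ ℝ).precompL 𝔼]
        verticalAvg h q δ y3) y) y := by
  have hφ2 : Integrable (fun x => φ x ^ 2) :=
    (hφ.continuous.pow 2).integrable_of_hasCompactSupport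
      (.of_support_subset_isCompact (isCompact_closedBall 0 1)
        ((support_pow _ two_ne_zero).trans_subset hφ_supp))
  have hkernel : HasCompactSupport (fun t => Phid φ δ 0 t ^ 2) :=
    .of_support_subset_isCompact (isCompact_closedBall 0 δ)
      ((support_pow _ two_ne_zero).trans_subset (support_Phid_zero_subset hφ_supp hδ))
  have hQ : LocallyIntegrable (verticalAvg h q δ y3) :=
    (memLp_top_of_bound (aestronglyMeasurable_verticalAvg hh hδ hq_meas y3) _
      (ae_of_all _ (norm_verticalAvg_le hh hδ hq y3))).locallyIntegrable le_top
  rw [Rdel_eq_convolution hφ2 hh hq_meas hq hδ y3]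
  exact hkernel.hasFDerivAt_convolution_left _ (by unfold Phid; fun_prop) hQ y

theorem norm_fderiv_Rdel_le (hφ : ContDiff ℝ 1 φ) (hφ_supp : support φ ⊆ closedBall 0 1)
    (hh : Integrable (fun x => h x ^ 2)) (hq_meas : Measurable (fun p : 𝔼 × ℝ => q p.1 p.2))
    (hq : ∀ x' x3, |q x' x3| ≤ K) (hδ : 0 < δ) {S : ℝ}
    (hS : ∀ z, ‖fderiv ℝ (fun z => φ z ^ 2) z‖ ≤ S) (y3 : ℝ) (y : 𝔼) :
    ‖fderiv ℝ (fun y' => Rdel φ h q δ y' y3) y‖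
      ≤ δ⁻¹ * (S * (K * ∫ x, h x ^ 2) * volume.real (closedBall (0 : 𝔼) 1)) := by
  rw [(hasFDerivAt_Rdel hφ hφ_supp hh hq_meas hq hδ y3 y).fderiv]
  have hL : ∀ (a : 𝔼 →L[ℝ] ℝ) (b : ℝ),
      ‖(ContinuousLinearMap.lsmul ℝ ℝ : ℝ →L[ℝ] ℝ →L[ℝ] ℝ).precompL 𝔼 a b‖ ≤ ‖a‖ * ‖b‖ := by
    intro a b
    have : (ContinuousLinearMap.lsmul ℝ ℝ : ℝ →L[ℝ] ℝ →L[ℝ] ℝ).precompL 𝔼 a b = b • a := by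
      ext x
      simp [ContinuousLinearMap.precompL, mul_comm]
    rw [this, norm_smul, mul_comm]
  refine (norm_convolution_le_of_support_subset_closedBall hL (norm_fderiv_Phid_zero_sq_le hS hδ)
    (support_fderiv_Phid_zero_sq_subset hφ_supp hδ) (norm_verticalAvg_le hh hδ hq y3) y).trans_eq ?_
  rw [Measure.addHaar_real_closedBall' _ _ hδ.le, finrank_euclideanSpace_fin]
  field_simp

theorem support_fderiv_Rdel_subset (hφ : ContDiff ℝ 1 φ) (hφ_supp : support φ ⊆ closedBall 0 1)
    (hh : Integrable (fun x => h x ^ 2)) (hq_meas : Measurable (fun p : 𝔼 × ℝ => q p.1 p.2))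
    (hq : ∀ x' x3, |q x' x3| ≤ K) (hδ : 0 < δ) {s : Set 𝔼}
    (hq_zero : ∀ x' ∉ s, ∀ x3, q x' x3 = 0) (y3 : ℝ) :
    support (fderiv ℝ (fun y' => Rdel φ h q δ y' y3)) ⊆ cthickening δ s := by
  rw [funext fun y => (hasFDerivAt_Rdel hφ hφ_supp hh hq_meas hq hδ y3 y).fderiv]
  exact support_convolution_subset_cthickening (support_fderiv_Phid_zero_sq_subset hφ_supp hδ)
    (support_verticalAvg_subset hq_zero y3)

end Rdel

theorem stmt_3_general
    (ω : Set (EuclideanSpace ℝ (Fin 2)))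
    (hω_bdd : Bornology.IsBounded ω)
    (M : ℝ) (hM : 0 < M)
    (φ : EuclideanSpace ℝ (Fin 2) → ℝ) (hφ_smooth : ContDiff ℝ (⊤ : ℕ∞) φ)
    (hφ_supp : Function.support φ ⊆ Metric.closedBall 0 1)
    (h : ℝ → ℝ) (hh_smooth : ContDiff ℝ (⊤ : ℕ∞) h)
    (hh_supp : Function.support h ⊆ Set.Icc (-1 : ℝ) 1)
    (q : EuclideanSpace ℝ (Fin 2) → ℝ → ℝ)
    (hq_meas : Measurable (fun p : EuclideanSpace ℝ (Fin 2) × ℝ => q p.1 p.2))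
    (hq_bdd : ∀ (x' : EuclideanSpace ℝ (Fin 2)) (x3 : ℝ), |q x' x3| ≤ 2 * M)
    (hq_zero : ∀ x' ∉ closure ω, ∀ x3 : ℝ, q x' x3 = 0) :
    ∃ C > 0, ∀ δ ∈ Set.Ioo (0 : ℝ) 1, ∀ y3 : ℝ,
      Differentiable ℝ (fun y' => Rdel φ h q δ y' y3) ∧
      Real.sqrt (∫ y' : EuclideanSpace ℝ (Fin 2),
          ‖gradient (fun y' => Rdel φ h q δ y' y3) y'‖ ^ 2)
        ≤ C * δ⁻¹ := by
  have hφ : ContDiff ℝ 1 φ := hφ_smooth.of_le (by exact_mod_cast le_top)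
  obtain ⟨S, hS⟩ := ((hφ.pow 2).continuous_fderiv one_ne_zero).bounded_above_of_compact_support
    ((HasCompactSupport.of_support_subset_isCompact (isCompact_closedBall 0 1)
      ((support_pow _ two_ne_zero).trans_subset hφ_supp)).fderiv ℝ)
  have hh : Integrable (fun x => h x ^ 2) :=
    (hh_smooth.continuous.pow 2).integrable_of_hasCompactSupport
      (.of_support_subset_isCompact isCompact_Icc
        ((support_pow _ two_ne_zero).trans_subset hh_supp))
  set Ω := cthickening 1 (closure ω)
  have hΩ : IsCompact Ω := hω_bdd.isCompact_closure.cthickening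
  set c := S * (2 * M * ∫ x, h x ^ 2) * volume.real (closedBall (0 : 𝔼) 1)
  have hS0 : 0 ≤ S := (norm_nonneg _).trans (hS 0)
  have hc : 0 ≤ c := by positivity
  refine ⟨√(volume.real Ω) * c + 1, by positivity, fun δ ⟨hδ, hδ1⟩ y3 => ⟨fun y =>
    (hasFDerivAt_Rdel hφ hφ_supp hh hq_meas hq_bdd hδ y3 y).differentiableAt, ?_⟩⟩
  simp_rw [gradient, LinearIsometryEquiv.norm_map]
  calc _ ≤ √(volume.real Ω) * (δ⁻¹ * c) :=
        sqrt_integral_norm_sq_le hΩ.measurableSet hΩ.measure_lt_top.ne (by positivity)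
          (norm_fderiv_Rdel_le hφ hφ_supp hh hq_meas hq_bdd hδ hS y3)
          ((support_fderiv_Rdel_subset hφ hφ_supp hh hq_meas hq_bdd hδ hq_zero y3).trans
            (cthickening_mono hδ1.le _))
    _ ≤ _ := by nlinarith [inv_pos.2 hδ, Real.sqrt_nonneg (volume.real Ω)]

theorem stmt_3
    (ω : Set (EuclideanSpace ℝ (Fin 2))) (hω_open : IsOpen ω)
    (hω_bdd : Bornology.IsBounded ω)
    (M : ℝ) (hM : 0 < M)
    (φ : EuclideanSpace ℝ (Fin 2) → ℝ) (hφ_smooth : ContDiff ℝ (⊤ : ℕ∞) φ)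
    (hφ_supp : Function.support φ ⊆ Metric.closedBall 0 1)
    (hφ_int : ∫ x : EuclideanSpace ℝ (Fin 2), (φ x) ^ 2 = 1)
    (h : ℝ → ℝ) (hh_smooth : ContDiff ℝ (⊤ : ℕ∞) h)
    (hh_supp : Function.support h ⊆ Set.Icc (-1 : ℝ) 1)
    (hh_int : ∫ x : ℝ, (h x) ^ 2 = 1)
    (q : EuclideanSpace ℝ (Fin 2) → ℝ → ℝ)
    (hq_meas : Measurable (fun p : EuclideanSpace ℝ (Fin 2) × ℝ => q p.1 p.2))
    (hq_bdd : ∀ (x' : EuclideanSpace ℝ (Fin 2)) (x3 : ℝ), |q x' x3| ≤ 2 * M)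
    (hq_zero : ∀ x' ∉ closure ω, ∀ x3 : ℝ, q x' x3 = 0) :
    ∃ C > 0, ∀ δ ∈ Set.Ioo (0 : ℝ) 1, ∀ y3 : ℝ,
      Differentiable ℝ (fun y' => Rdel φ h q δ y' y3) ∧
      Real.sqrt (∫ y' : EuclideanSpace ℝ (Fin 2),
          ‖gradient (fun y' => Rdel φ h q δ y' y3) y'‖ ^ 2)
        ≤ C * δ⁻¹ :=
  stmt_3_general ω hω_bdd M hM φ hφ_smooth hφ_supp h hh_smooth hh_supp q hq_meas hq_bdd hq_zero
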